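/- arXiv:1910.13091 — 4 statements merged into one kernel-verified Lean document; each statement's English description precedes it below -/
import Mathlib

section
/- Let V be a 2-dimensional real vector space with a nondegenerate symmetric bilinear form g of signature (1,1), and α : V × V → W symmetric bilinear with relative null space N of dimension exactly 1, such that trace_g α ≠ 0. Then N is nondegenerate, i.e., N is spanned by a vector e₁ with g(e₁,e₁) = ±1 (after normalization), equivalently N contains no nonzero light-like vector. -/
/-- If the relative null space `N` of `α` has dimension exactly 1 and the trace
of `α` with respect to `g` is nonzero, then `N` contains no nonzero light-like
vector (i.e. `N` is nondegenerate). -/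
theorem stmt3 {V W : Type*} [AddCommGroup V] [Module ℝ V]
    [AddCommGroup W] [Module ℝ W]
    (g : V →ₗ[ℝ] V →ₗ[ℝ] ℝ) (hg : ∀ x y, g x y = g y x)
    (α : V →ₗ[ℝ] V →ₗ[ℝ] W) (hα : ∀ x y, α x y = α y x)
    (e₁ e₂ : V) (ε : ℝ) (hε : ε = 1 ∨ ε = -1)
    (h11 : g e₁ e₁ = ε) (h22 : g e₂ e₂ = -ε) (h12 : g e₁ e₂ = 0)
    (hspan : Submodule.span ℝ ({e₁, e₂} : Set V) = ⊤)
    (hdimV : Module.finrank ℝ V = 2)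
    (hN : Module.finrank ℝ (LinearMap.ker α) = 1)
    (htr : ε • α e₁ e₁ - ε • α e₂ e₂ ≠ 0) :
    ∀ X ∈ LinearMap.ker α, g X X = 0 → X = 0 := by
  intro X hX hgX
  have hε0 : ε ≠ 0 := by rcases hε with h | h <;> simp [h]
  have hXspan : X ∈ Submodule.span ℝ ({e₁, e₂} : Set V) := by
    rw [hspan]; exact Submodule.mem_top
  rw [Submodule.mem_span_pair] at hXspan
  obtain ⟨a, b, rfl⟩ := hXspan
  have hker : α (a • e₁ + b • e₂) = 0 := hX
  have eq1 : a • α e₁ e₁ + b • α e₂ e₁ = 0 := by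
    have := congrArg (fun f => f e₁) hker
    simpa [map_add, map_smul] using this
  have eq2 : a • α e₁ e₂ + b • α e₂ e₂ = 0 := by
    have := congrArg (fun f => f e₂) hker
    simpa [map_add, map_smul] using this
  have h21 : g e₂ e₁ = 0 := by rw [hg e₂ e₁, h12]
  have hab : (a - b) * (a + b) = 0 := by
    have hg0 : ε * (a * a - b * b) = 0 := by
      have := hgX
      simp only [map_add, map_smul, LinearMap.add_apply, LinearMap.smul_apply,
        h11, h22, h12, h21, smul_eq_mul] at this
      nlinarith [this]
    have := mul_eq_zero.mp hg0
    rcases this with h | h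
    · exact absurd h hε0
    · nlinarith
  have hkey : α e₁ e₁ - α e₂ e₂ ≠ 0 := by
    intro h
    apply htr
    have : ε • (α e₁ e₁ - α e₂ e₂) = 0 := by rw [h, smul_zero]
    rw [smul_sub] at this
    exact this
  rcases mul_eq_zero.mp hab with h | h
  · -- a = b
    have hb : b = a := by linarith
    rw [hb] at eq1 eq2
    have : a • (α e₁ e₁ - α e₂ e₂) = 0 := by
      have h3 : a • α e₁ e₁ + a • α e₂ e₁ = 0 := eq1
      have h4 : a • α e₁ e₂ + a • α e₂ e₂ = 0 := eq2
      rw [hα e₂ e₁] at h3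
      have := sub_eq_zero.mpr (h3.trans h4.symm)
      rw [smul_sub]
      abel_nf
      abel_nf at this
      linear_combination (norm := abel) this
    have ha : a = 0 := by
      rcases smul_eq_zero.mp this with h | h
      · exact h
      · exact absurd h hkey
    simp [ha, hb]
  · -- a = -b
    have hb : b = -a := by linarith
    rw [hb] at eq1 eq2
    have : a • (α e₁ e₁ - α e₂ e₂) = 0 := by
      have h3 : a • α e₁ e₁ + (-a) • α e₂ e₁ = 0 := eq1
      have h4 : a • α e₁ e₂ + (-a) • α e₂ e₂ = 0 := eq2
      rw [hα e₂ e₁] at h3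
      rw [smul_sub]
      have h5 : a • α e₁ e₁ - a • α e₁ e₂ = 0 := by
        rw [neg_smul] at h3
        linear_combination (norm := abel) h3
      have h6 : a • α e₁ e₂ - a • α e₂ e₂ = 0 := by
        rw [neg_smul] at h4
        linear_combination (norm := abel) h4
      linear_combination (norm := abel) h5 + h6
    have ha : a = 0 := by
      rcases smul_eq_zero.mp this with h | h
      · exact h
      · exact absurd h hkey
    simp [ha, hb]
end

section
/- Define f : R² → R⁴ by f(s,t) = (b(t)s + M_b(t), s·sinh t + M_c(t), s·cosh t + M_s(t), b(t)s + M_b(t)), where M_b(t) = ∫_{t₀}^t m(ξ)b'(ξ)dξ, M_c(t) = ∫_{t₀}^t m(ξ)cosh ξ dξ, M_s(t) = ∫_{t₀}^t m(ξ)sinh ξ dξ, and b satisfies b''(t) − b(t) = F(t). Then with the pseudo-Euclidean metric of index 2 on R⁴ given by ⟨x,y⟩ = −x₁y₁ − x₂y₂ + x₃y₃ + x₄y₄, the pullback metric of f equals ds² − (s+m(t))² dt², i.e., ⟨f_s,f_s⟩ = 1, ⟨f_s,f_t⟩ = 0, ⟨f_t,f_t⟩ = −(s+m(t))². -/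
/-- The neutral metric of index 2 on `ℝ⁴`. -/
noncomputable def g4 (x y : Fin 4 → ℝ) : ℝ :=
  -(x 0 * y 0) - x 1 * y 1 + x 2 * y 2 + x 3 * y 3

/-- The pullback metric of the immersion of Theorem 3.3 (i) is
`ds² - (s + m t)² dt²`. -/
theorem stmt12 (b m F : ℝ → ℝ) (t₀ : ℝ)
    (hb : ContDiff ℝ (⊤ : ℕ∞) b) (hm : ContDiff ℝ (⊤ : ℕ∞) m)
    (hbF : ∀ t, deriv (deriv b) t - b t = F t) (hFnv : ∀ t, F t ≠ 0)
    (f : ℝ → ℝ → Fin 4 → ℝ)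
    (hf : ∀ s t, f s t =
      ![b t * s + ∫ ξ in t₀..t, m ξ * deriv b ξ,
        s * Real.sinh t + ∫ ξ in t₀..t, m ξ * Real.cosh ξ,
        s * Real.cosh t + ∫ ξ in t₀..t, m ξ * Real.sinh ξ,
        b t * s + ∫ ξ in t₀..t, m ξ * deriv b ξ]) :
    ∀ (s t : ℝ) (fs ft : Fin 4 → ℝ),
      HasDerivAt (fun s' => f s' t) fs s →
      HasDerivAt (fun t' => f s t') ft t →
      g4 fs fs = 1 ∧ g4 fs ft = 0 ∧ g4 ft ft = -(s + m t) ^ 2 := by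
  intro s t fs ft hfs hft
  have hbd : Differentiable ℝ b := hb.differentiable (by simp)
  have hb'c : Continuous (deriv b) := hb.continuous_deriv (by simp)
  have hmc : Continuous m := hm.continuous
  -- derivative in s
  have hs : HasDerivAt (fun s' => f s' t)
      (![b t, Real.sinh t, Real.cosh t, b t]) s := by
    have : (fun s' => f s' t) = fun s' =>
        ![b t * s' + ∫ ξ in t₀..t, m ξ * deriv b ξ,
          s' * Real.sinh t + ∫ ξ in t₀..t, m ξ * Real.cosh ξ,
          s' * Real.cosh t + ∫ ξ in t₀..t, m ξ * Real.sinh ξ,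
          b t * s' + ∫ ξ in t₀..t, m ξ * deriv b ξ] := by
      funext s'; exact hf s' t
    rw [this, hasDerivAt_pi]
    intro i
    fin_cases i <;> simp only [Matrix.cons_val_zero, Matrix.cons_val_one, Matrix.head_cons,
      Matrix.cons_val_fin_one, Fin.mk_one, Matrix.cons_val_two, Matrix.tail_cons,
      Matrix.cons_val_three, Fin.isValue]
    · simpa using ((hasDerivAt_id s).const_mul (b t)).add_const (∫ ξ in t₀..t, m ξ * deriv b ξ)
    · simpa using ((hasDerivAt_id s).mul_const (Real.sinh t)).add_const (∫ ξ in t₀..t, m ξ * Real.cosh ξ)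
    · simpa using ((hasDerivAt_id s).mul_const (Real.cosh t)).add_const (∫ ξ in t₀..t, m ξ * Real.sinh ξ)
    · simpa using ((hasDerivAt_id s).const_mul (b t)).add_const (∫ ξ in t₀..t, m ξ * deriv b ξ)
  -- derivative in t
  have ht : HasDerivAt (fun t' => f s t')
      (![(s + m t) * deriv b t, (s + m t) * Real.cosh t,
         (s + m t) * Real.sinh t, (s + m t) * deriv b t]) t := by
    have : (fun t' => f s t') = fun t' =>
        ![b t' * s + ∫ ξ in t₀..t', m ξ * deriv b ξ,
          s * Real.sinh t' + ∫ ξ in t₀..t', m ξ * Real.cosh ξ,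
          s * Real.cosh t' + ∫ ξ in t₀..t', m ξ * Real.sinh ξ,
          b t' * s + ∫ ξ in t₀..t', m ξ * deriv b ξ] := by
      funext t'; exact hf s t'
    rw [this, hasDerivAt_pi]
    have h1 : HasDerivAt (fun t' => ∫ ξ in t₀..t', m ξ * deriv b ξ)
        (m t * deriv b t) t :=
      (Continuous.integral_hasStrictDerivAt (hmc.mul hb'c) t₀ t).hasDerivAt
    have h2 : HasDerivAt (fun t' => ∫ ξ in t₀..t', m ξ * Real.cosh ξ)
        (m t * Real.cosh t) t :=
      (Continuous.integral_hasStrictDerivAt (hmc.mul Real.continuous_cosh) t₀ t).hasDerivAt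
    have h3 : HasDerivAt (fun t' => ∫ ξ in t₀..t', m ξ * Real.sinh ξ)
        (m t * Real.sinh t) t :=
      (Continuous.integral_hasStrictDerivAt (hmc.mul Real.continuous_sinh) t₀ t).hasDerivAt
    have hbt : HasDerivAt b (deriv b t) t := (hbd t).hasDerivAt
    intro i
    fin_cases i <;> simp only [Matrix.cons_val_zero, Matrix.cons_val_one, Matrix.head_cons,
      Matrix.cons_val_fin_one, Fin.mk_one, Matrix.cons_val_two, Matrix.tail_cons,
      Matrix.cons_val_three, Fin.isValue]
    · show HasDerivAt _ ((s + m t) * deriv b t) t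
      have := (hbt.mul_const s).add h1
      exact this.congr_deriv (by ring)
    · show HasDerivAt _ ((s + m t) * Real.cosh t) t
      have := ((Real.hasDerivAt_sinh t).const_mul s).add h2
      exact this.congr_deriv (by ring)
    · show HasDerivAt _ ((s + m t) * Real.sinh t) t
      have := ((Real.hasDerivAt_cosh t).const_mul s).add h3
      exact this.congr_deriv (by ring)
    · show HasDerivAt _ ((s + m t) * deriv b t) t
      have := (hbt.mul_const s).add h1
      exact this.congr_deriv (by ring)
  have efs := hfs.unique hs
  have eft := hft.unique ht
  subst efs eft
  have hch := Real.cosh_sq_sub_sinh_sq t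
  refine ⟨?_, ?_, ?_⟩ <;>
    simp only [g4, Matrix.cons_val_zero, Matrix.cons_val_one, Matrix.head_cons,
      Matrix.cons_val_two, Matrix.tail_cons, Matrix.cons_val_three] <;> nlinarith [hch]
end

section
/- Define f : R² → R⁵ by f(s,t) = (b(t)cosh s, sinh s, cosh s · cos t, cosh s · sin t, b(t)cosh s). Then ⟨f,f⟩ = 1 with respect to the index-2 form ⟨x,y⟩ = −x₁y₁ − x₂y₂ + x₃y₃ + x₄y₄ + x₅y₅, and the identity f_tt + cosh²(s)·f − sinh s cosh s · f_s = cosh s·(b''(t) + b(t))·(1,0,0,0,1) holds. -/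
/-!
Write `f(s,t) = cosh s • γ(t) + sinh s • e₂` with `γ(t) = b(t) e + cos t e₃ + sin t e₄` and
`e = (1,0,0,0,1)`. Differentiating `γ` rotates the pair `(e₃, e₄)` to `(e₄, -e₃)`, so
`γ'' + γ = (b'' + b) e`. Since `f_s = sinh s • γ + cosh s • e₂` and `f_tt = cosh s • γ''`,
the identity `cosh² s - sinh² s = 1` reduces `f_tt + cosh² s • f - sinh s cosh s • f_s`
to `cosh s • (γ'' + γ)`.
-/

/-- The metric of index 2 on `ℝ⁵`. -/
noncomputable def g5 (x y : Fin 5 → ℝ) : ℝ :=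
  -(x 0 * y 0) - x 1 * y 1 + x 2 * y 2 + x 3 * y 3 + x 4 * y 4

open Real

section

variable {E : Type*} [NormedAddCommGroup E] [NormedSpace ℝ E]

theorem hasDerivAt_cosh_smul_add_sinh_smul (x v : E) (s : ℝ) :
    HasDerivAt (fun s => cosh s • x + sinh s • v) (sinh s • x + cosh s • v) s :=
  ((hasDerivAt_cosh s).smul_const x).add ((hasDerivAt_sinh s).smul_const v)

theorem cosh_smul_add_cosh_sq_smul_sub_sinh_mul_cosh_smul (x v a : E) (s : ℝ) :
    cosh s • a + cosh s ^ 2 • (cosh s • x + sinh s • v) -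
        (sinh s * cosh s) • (sinh s • x + cosh s • v) = cosh s • (a + x) := by
  linear_combination (norm := module) (cosh_sq_sub_sinh_sq s) • (cosh s • x)

noncomputable def circleGraph (b : ℝ → ℝ) (e u w : E) (t : ℝ) : E :=
  b t • e + cos t • u + sin t • w

theorem hasDerivAt_circleGraph {b b' : ℝ → ℝ} {t : ℝ} (hb : HasDerivAt b (b' t) t)
    (e u w : E) : HasDerivAt (circleGraph b e u w) (circleGraph b' e w (-u) t) t := by
  rw [show circleGraph b' e w (-u) t = b' t • e + -sin t • u + cos t • w by
    simp only [circleGraph, neg_smul, smul_neg]; abel]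
  exact ((hb.smul_const e).add ((hasDerivAt_cos t).smul_const u)).add
    ((hasDerivAt_sin t).smul_const w)

theorem circleGraph_neg_add_circleGraph (b b'' : ℝ → ℝ) (e u w : E) (t : ℝ) :
    circleGraph b'' e (-u) (-w) t + circleGraph b e u w t = (b'' t + b t) • e := by
  simp only [circleGraph]
  module

end

theorem vec_eq_cosh_smul_circleGraph_add_sinh_smul (b : ℝ → ℝ) (s t : ℝ) :
    ![b t * cosh s, sinh s, cosh s * cos t, cosh s * sin t, b t * cosh s] =
      cosh s • circleGraph b ![1, 0, 0, 0, 1] ![0, 0, 1, 0, 0] ![0, 0, 0, 1, 0] t +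
        sinh s • ![0, 1, 0, 0, 0] := by
  ext i
  fin_cases i <;> simp [circleGraph] <;> ring

theorem g5_self_eq_one (b : ℝ → ℝ) (s t : ℝ) :
    g5 ![b t * cosh s, sinh s, cosh s * cos t, cosh s * sin t, b t * cosh s]
      ![b t * cosh s, sinh s, cosh s * cos t, cosh s * sin t, b t * cosh s] = 1 := by
  simp only [g5, Fin.isValue, Matrix.cons_val_zero, Matrix.cons_val_one, Matrix.cons_val]
  linear_combination cosh_sq_sub_sinh_sq s + cosh s ^ 2 * sin_sq_add_cos_sq t

/-- The surface of Example 3.5 lies in `S⁴₂` and satisfies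
`f_tt + cosh² s • f - (sinh s cosh s) • f_s = cosh s (b'' + b) • (1,0,0,0,1)`. -/
theorem stmt16 (b b₁ b₂ : ℝ → ℝ)
    (hb : ∀ t, HasDerivAt b (b₁ t) t)
    (hb₁ : ∀ t, HasDerivAt b₁ (b₂ t) t)
    (f : ℝ → ℝ → Fin 5 → ℝ)
    (hf : ∀ s t, f s t =
      ![b t * Real.cosh s, Real.sinh s, Real.cosh s * Real.cos t,
        Real.cosh s * Real.sin t, b t * Real.cosh s])
    (Fs Ft Ftt : ℝ → ℝ → Fin 5 → ℝ)
    (hFs : ∀ s t, HasDerivAt (fun s' => f s' t) (Fs s t) s)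
    (hFt : ∀ s t, HasDerivAt (fun t' => f s t') (Ft s t) t)
    (hFtt : ∀ s t, HasDerivAt (fun t' => Ft s t') (Ftt s t) t) :
    ∀ s t : ℝ,
      g5 (f s t) (f s t) = 1 ∧
      Ftt s t + (Real.cosh s) ^ 2 • f s t -
          (Real.sinh s * Real.cosh s) • Fs s t =
        (Real.cosh s * (b₂ t + b t)) • ![1, 0, 0, 0, 1] := by
  set e : Fin 5 → ℝ := ![1, 0, 0, 0, 1]
  set e₂ : Fin 5 → ℝ := ![0, 1, 0, 0, 0]
  set e₃ : Fin 5 → ℝ := ![0, 0, 1, 0, 0]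
  set e₄ : Fin 5 → ℝ := ![0, 0, 0, 1, 0]
  have hf' : ∀ s t, f s t = cosh s • circleGraph b e e₃ e₄ t + sinh s • e₂ := fun s t =>
    (hf s t).trans (vec_eq_cosh_smul_circleGraph_add_sinh_smul b s t)
  have hFt' : ∀ s t, Ft s t = cosh s • circleGraph b₁ e e₄ (-e₃) t := fun s t =>
    (hFt s t).unique <| by
      simp_rw [hf']
      exact ((hasDerivAt_circleGraph (hb t) e e₃ e₄).const_smul (cosh s)).add_const _
  intro s t
  have hFs' : Fs s t = sinh s • circleGraph b e e₃ e₄ t + cosh s • e₂ :=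
    (hFs s t).unique <| by
      simp_rw [hf']
      exact hasDerivAt_cosh_smul_add_sinh_smul _ _ s
  have hFtt' : Ftt s t = cosh s • circleGraph b₂ e (-e₃) (-e₄) t :=
    (hFtt s t).unique <| by
      simp_rw [hFt']
      exact (hasDerivAt_circleGraph (hb₁ t) e e₄ (-e₃)).const_smul (cosh s)
  refine ⟨hf s t ▸ g5_self_eq_one b s t, ?_⟩
  rw [hFtt', hf', hFs', cosh_smul_add_cosh_sq_smul_sub_sinh_mul_cosh_smul,
    circleGraph_neg_add_circleGraph, smul_smul]
end

section
/- Let α : I → S²₁ ⊂ E³₁ be a unit-speed time-like curve with unit normal N and nonvanishing curvature κ (α'' = κN + α, N' = κα'), let b : I → R be smooth, and set B₁₀(t) = ∫_{t₀}^t κ(ξ)b'(ξ)dξ. Define f : J×I → R⁵ by f(s,t) = cos s·(b(t), α₁(t), α₂(t), α₃(t), b(t)) + sin s·(B₁₀(t), N₁(t), N₂(t), N₃(t), B₁₀(t)). Then ⟨f,f⟩ = 1 in E⁵₂ (so f maps into S⁴₂) and f_ss = −f. -/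
/-- The Lorentz metric on `ℝ³`. -/
noncomputable def g3 (x y : Fin 3 → ℝ) : ℝ :=
  -(x 0 * y 0) + x 1 * y 1 + x 2 * y 2

/-! The vectors `v = (b, α, b)` and `w = (B₁₀, N, B₁₀)` differ from `(0, α, 0)` and `(0, N, 0)` by
multiples of the null vector `(1, 0, 0, 0, 1)`, which is orthogonal to everything of the form
`(c, x, c)`; so `⟨·,·⟩` restricted to such vectors is the metric of `E³₁`, and `v, w` are
orthonormal. Then `f(·, t) = cos • v + sin • w` is a great circle of `S⁴₂`, and `f_ss = -f`. -/

open Real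

lemma g5_comm (x y : Fin 5 → ℝ) : g5 x y = g5 y x := by
  simp only [g5]; ring

lemma g5_add_left (x y z : Fin 5 → ℝ) : g5 (x + y) z = g5 x z + g5 y z := by
  simp only [g5, Pi.add_apply]; ring

lemma g5_smul_left (c : ℝ) (x y : Fin 5 → ℝ) : g5 (c • x) y = c * g5 x y := by
  simp only [g5, Pi.smul_apply, smul_eq_mul]; ring

lemma g5_add_right (x y z : Fin 5 → ℝ) : g5 x (y + z) = g5 x y + g5 x z := by
  simp only [g5, Pi.add_apply]; ring

lemma g5_smul_right (c : ℝ) (x y : Fin 5 → ℝ) : g5 x (c • y) = c * g5 x y := by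
  simp only [g5, Pi.smul_apply, smul_eq_mul]; ring

lemma g5_cons_eq_g3 (c d : ℝ) (x y : Fin 3 → ℝ) :
    g5 ![c, x 0, x 1, x 2, c] ![d, y 0, y 1, y 2, d] = g3 x y := by
  simp only [g5, g3, Matrix.cons_val_zero, Matrix.cons_val_one, Matrix.cons_val_two,
    Matrix.cons_val_three, Matrix.cons_val_four, Matrix.head_cons, Matrix.tail_cons]
  ring

lemma g5_cos_smul_add_sin_smul_self {v w : Fin 5 → ℝ} (hv : g5 v v = 1) (hw : g5 w w = 1)
    (hvw : g5 v w = 0) (s : ℝ) : g5 (cos s • v + sin s • w) (cos s • v + sin s • w) = 1 := by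
  have hwv : g5 w v = 0 := by rwa [g5_comm]
  simp only [g5_add_left, g5_add_right, g5_smul_left, g5_smul_right, hv, hw, hvw, hwv]
  linear_combination sin_sq_add_cos_sq s

section GreatCircle

variable {E : Type*} [NormedAddCommGroup E] [NormedSpace ℝ E]

lemma hasDerivAt_cos_smul_add_sin_smul (v w : E) (s : ℝ) :
    HasDerivAt (fun s => cos s • v + sin s • w) (cos s • w - sin s • v) s := by
  refine (((hasDerivAt_cos s).smul_const v).add ((hasDerivAt_sin s).smul_const w)).congr_deriv ?_
  rw [neg_smul]; abel

lemma deriv_deriv_cos_smul_add_sin_smul (v w : E) (s : ℝ) :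
    deriv (deriv fun s => cos s • v + sin s • w) s = -(cos s • v + sin s • w) := by
  have hderiv : deriv (fun s => cos s • v + sin s • w) = fun s => cos s • w + sin s • -v := by
    funext s
    rw [(hasDerivAt_cos_smul_add_sin_smul v w s).deriv, smul_neg, sub_eq_add_neg]
  rw [hderiv, (hasDerivAt_cos_smul_add_sin_smul w (-v) s).deriv, smul_neg]
  abel

end GreatCircle

/-- The surface of Proposition 3.6 lies in `S⁴₂` and satisfies `f_ss = -f`. -/
theorem stmt18 (α N : ℝ → Fin 3 → ℝ) (κ b : ℝ → ℝ) (t₀ : ℝ)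
    (hαα : ∀ t, g3 (α t) (α t) = 1)
    (hNN : ∀ t, g3 (N t) (N t) = 1)
    (hαN : ∀ t, g3 (α t) (N t) = 0)
    (f : ℝ → ℝ → Fin 5 → ℝ)
    (hf : ∀ s t, f s t =
      Real.cos s • ![b t, α t 0, α t 1, α t 2, b t] +
      Real.sin s • ![∫ ξ in t₀..t, κ ξ * deriv b ξ, N t 0, N t 1, N t 2,
        ∫ ξ in t₀..t, κ ξ * deriv b ξ]) :
    (∀ s t : ℝ, g5 (f s t) (f s t) = 1) ∧
    (∀ s t : ℝ,
      deriv (fun s'' => deriv (fun s' => f s' t) s'') s = -(f s t)) := by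
  refine ⟨fun s t => ?_, fun s t => ?_⟩
  · rw [hf]
    exact g5_cos_smul_add_sin_smul_self (by rw [g5_cons_eq_g3, hαα])
      (by rw [g5_cons_eq_g3, hNN]) (by rw [g5_cons_eq_g3, hαN]) s
  · simp only [hf]
    exact deriv_deriv_cos_smul_add_sin_smul _ _ s
end
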